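/- An h-pitched helicoidal surface Σ = X(ℝ²) in ℍ²×ℝ, X(u,v) = (e^{vJ}α(u), φ(u), hv), is a rotator to mean curvature flow (with respect to the rotations about the vertical axis through (0,0,1)) if and only if its mean curvature function satisfies H = ρτ/φ, where ρ = (a² + b² − μ² + c²)^{−1/2} with a = μφ', b = (1+μ²)/φ, c = −φ'/h, and τ = ⟨α, α'⟩. -/

import Mathlib

open Filter

noncomputable section

/-- `τ = ⟨α, T⟩` for the unit-speed generating plane curve `α = (α₁, α₂)`. -/
def tauF (α₁ α₂ : ℝ → ℝ) (u : ℝ) : ℝ := α₁ u * deriv α₁ u + α₂ u * deriv α₂ u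

/-- `μ = ⟨α, N⟩`, `N = JT`. -/
def muF (α₁ α₂ : ℝ → ℝ) (u : ℝ) : ℝ := α₂ u * deriv α₁ u - α₁ u * deriv α₂ u

/-- curvature `k = ⟨α'', N⟩` of the plane curve `α`. -/
def curvF (α₁ α₂ : ℝ → ℝ) (u : ℝ) : ℝ :=
  deriv (deriv α₁) u * (-(deriv α₂ u)) + deriv (deriv α₂) u * deriv α₁ u

/-- first component of the helicoidal parameterization `X(u,v) = (e^{vJ}α(u), φ(u), hv)`. -/
def X1 (α₁ α₂ : ℝ → ℝ) (u v : ℝ) : ℝ := Real.cos v * α₁ u - Real.sin v * α₂ u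

/-- second component of `X`. -/
def X2 (α₁ α₂ : ℝ → ℝ) (u v : ℝ) : ℝ := Real.sin v * α₁ u + Real.cos v * α₂ u

/-- `E = ⟨X_u, X_u⟩` in the Lorentzian metric `dx₁² + dx₂² − dx₃² + dt²` of `𝕃³×ℝ`. -/
def Ecoef (h : ℝ) (α₁ α₂ φ : ℝ → ℝ) (u v : ℝ) : ℝ :=
  (deriv (fun u => X1 α₁ α₂ u v) u) ^ 2 + (deriv (fun u => X2 α₁ α₂ u v) u) ^ 2
    - (deriv φ u) ^ 2 + (deriv (fun _ : ℝ => h * v) u) ^ 2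

/-- `F = ⟨X_u, X_v⟩`. -/
def Fcoef (h : ℝ) (α₁ α₂ φ : ℝ → ℝ) (u v : ℝ) : ℝ :=
  deriv (fun u => X1 α₁ α₂ u v) u * deriv (fun v => X1 α₁ α₂ u v) v
  + deriv (fun u => X2 α₁ α₂ u v) u * deriv (fun v => X2 α₁ α₂ u v) v
  - deriv φ u * deriv (fun _ : ℝ => φ u) v
  + deriv (fun _ : ℝ => h * v) u * deriv (fun v => h * v) v

/-- `G = ⟨X_v, X_v⟩`. -/
def Gcoef (h : ℝ) (α₁ α₂ φ : ℝ → ℝ) (u v : ℝ) : ℝ :=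
  (deriv (fun v => X1 α₁ α₂ u v) v) ^ 2 + (deriv (fun v => X2 α₁ α₂ u v) v) ^ 2
    - (deriv (fun _ : ℝ => φ u) v) ^ 2 + (deriv (fun v => h * v) v) ^ 2

/-- `a = μ φ'`. -/
def aF (α₁ α₂ φ : ℝ → ℝ) (u : ℝ) : ℝ := muF α₁ α₂ u * deriv φ u

/-- `b = (1 + μ²)/φ`. -/
def bF (α₁ α₂ φ : ℝ → ℝ) (u : ℝ) : ℝ := (1 + (muF α₁ α₂ u) ^ 2) / φ u

/-- `c = −φ'/h`. -/
def cF (h : ℝ) (φ : ℝ → ℝ) (u : ℝ) : ℝ := -(deriv φ u) / h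

/-- `ρ = (a² + b² − μ² + c²)^{-1/2}`. -/
def rhoF (h : ℝ) (α₁ α₂ φ : ℝ → ℝ) (u : ℝ) : ℝ :=
  (Real.sqrt ((aF α₁ α₂ φ u) ^ 2 + (bF α₁ α₂ φ u) ^ 2 - (muF α₁ α₂ u) ^ 2
    + (cF h φ u) ^ 2))⁻¹

/-- first component of the unit normal `η = ρ(e^{vJ}(aT + bN), μ, c)`. -/
def eta1 (h : ℝ) (α₁ α₂ φ : ℝ → ℝ) (u v : ℝ) : ℝ :=
  rhoF h α₁ α₂ φ u *
    (Real.cos v * (aF α₁ α₂ φ u * deriv α₁ u + bF α₁ α₂ φ u * (-(deriv α₂ u)))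
     - Real.sin v * (aF α₁ α₂ φ u * deriv α₂ u + bF α₁ α₂ φ u * deriv α₁ u))

/-- second component of `η`. -/
def eta2 (h : ℝ) (α₁ α₂ φ : ℝ → ℝ) (u v : ℝ) : ℝ :=
  rhoF h α₁ α₂ φ u *
    (Real.sin v * (aF α₁ α₂ φ u * deriv α₁ u + bF α₁ α₂ φ u * (-(deriv α₂ u)))
     + Real.cos v * (aF α₁ α₂ φ u * deriv α₂ u + bF α₁ α₂ φ u * deriv α₁ u))

/-- third component of `η`. -/
def eta3 (h : ℝ) (α₁ α₂ φ : ℝ → ℝ) (u : ℝ) : ℝ := rhoF h α₁ α₂ φ u * muF α₁ α₂ u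

/-- fourth (vertical) component of `η`. -/
def eta4 (h : ℝ) (α₁ α₂ φ : ℝ → ℝ) (u : ℝ) : ℝ := rhoF h α₁ α₂ φ u * cF h φ u

/-- `e = ⟨X_uu, η⟩`. -/
def ecoef (h : ℝ) (α₁ α₂ φ : ℝ → ℝ) (u v : ℝ) : ℝ :=
  deriv (fun u => deriv (fun u => X1 α₁ α₂ u v) u) u * eta1 h α₁ α₂ φ u v
  + deriv (fun u => deriv (fun u => X2 α₁ α₂ u v) u) u * eta2 h α₁ α₂ φ u v
  - deriv (deriv φ) u * eta3 h α₁ α₂ φ u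
  + deriv (fun u => deriv (fun _ : ℝ => h * v) u) u * eta4 h α₁ α₂ φ u

/-- `f = ⟨X_uv, η⟩`. -/
def fcoef (h : ℝ) (α₁ α₂ φ : ℝ → ℝ) (u v : ℝ) : ℝ :=
  deriv (fun v => deriv (fun u => X1 α₁ α₂ u v) u) v * eta1 h α₁ α₂ φ u v
  + deriv (fun v => deriv (fun u => X2 α₁ α₂ u v) u) v * eta2 h α₁ α₂ φ u v
  - deriv (fun _ : ℝ => deriv φ u) v * eta3 h α₁ α₂ φ u
  + deriv (fun v => deriv (fun _ : ℝ => h * v) u) v * eta4 h α₁ α₂ φ u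

/-- `g = ⟨X_vv, η⟩`. -/
def gcoef (h : ℝ) (α₁ α₂ φ : ℝ → ℝ) (u v : ℝ) : ℝ :=
  deriv (fun v => deriv (fun v => X1 α₁ α₂ u v) v) v * eta1 h α₁ α₂ φ u v
  + deriv (fun v => deriv (fun v => X2 α₁ α₂ u v) v) v * eta2 h α₁ α₂ φ u v
  - deriv (fun v => deriv (fun _ : ℝ => φ u) v) v * eta3 h α₁ α₂ φ u
  + deriv (fun v => deriv (fun v => h * v) v) v * eta4 h α₁ α₂ φ u

/-- mean curvature `H = (Eg − 2fF + Ge)/(2(EG − F²))`. -/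
def Hmean (h : ℝ) (α₁ α₂ φ : ℝ → ℝ) (u v : ℝ) : ℝ :=
  (Ecoef h α₁ α₂ φ u v * gcoef h α₁ α₂ φ u v
    - 2 * fcoef h α₁ α₂ φ u v * Fcoef h α₁ α₂ φ u v
    + Gcoef h α₁ α₂ φ u v * ecoef h α₁ α₂ φ u v) /
  (2 * (Ecoef h α₁ α₂ φ u v * Gcoef h α₁ α₂ φ u v - (Fcoef h α₁ α₂ φ u v) ^ 2))

/-- the rotator condition `H = ⟨Jπ(X), η⟩`, with `Jπ(X) = (−X₂, X₁, 0, 0)`. -/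
def IsRotator (h : ℝ) (α₁ α₂ φ : ℝ → ℝ) : Prop :=
  ∀ u v : ℝ, Hmean h α₁ α₂ φ u v =
    -(X2 α₁ α₂ u v) * eta1 h α₁ α₂ φ u v + X1 α₁ α₂ u v * eta2 h α₁ α₂ φ u v

end

/- Since `X` lies in `ℍ² × ℝ`, differentiating `φ² = 1 + |α|²` gives `φ φ' = τ`. Expanding
`⟨Jπ(X), η⟩` and using `cos² v + sin² v = 1` leaves `ρ(bτ − aμ)`, and
`bτ − aμ = (1 + μ²)τ/φ − μ²φ' = τ/φ`. So the rotator condition is `H = ρτ/φ`. -/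

theorem phi_mul_deriv_eq_tauF {α₁ α₂ φ : ℝ → ℝ} {u : ℝ} (hα₁ : DifferentiableAt ℝ α₁ u)
    (hα₂ : DifferentiableAt ℝ α₂ u) (hφ : DifferentiableAt ℝ φ u)
    (hhyp : ∀ u : ℝ, (φ u) ^ 2 = 1 + ((α₁ u) ^ 2 + (α₂ u) ^ 2)) :
    φ u * deriv φ u = tauF α₁ α₂ u := by
  have hlhs : HasDerivAt (fun u => (φ u) ^ 2) (2 * φ u ^ 1 * deriv φ u) u :=
    hφ.hasDerivAt.pow 2
  have hrhs : HasDerivAt (fun u => 1 + ((α₁ u) ^ 2 + (α₂ u) ^ 2))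
      (0 + (2 * α₁ u ^ 1 * deriv α₁ u + 2 * α₂ u ^ 1 * deriv α₂ u)) u :=
    (hasDerivAt_const u 1).add ((hα₁.hasDerivAt.pow 2).add (hα₂.hasDerivAt.pow 2))
  rw [funext hhyp] at hlhs
  have := hlhs.unique hrhs
  unfold tauF
  linear_combination this / 2

theorem neg_X2_mul_eta1_add_X1_mul_eta2 (h : ℝ) (α₁ α₂ φ : ℝ → ℝ) (u v : ℝ) :
    -(X2 α₁ α₂ u v) * eta1 h α₁ α₂ φ u v + X1 α₁ α₂ u v * eta2 h α₁ α₂ φ u v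
      = rhoF h α₁ α₂ φ u * (bF α₁ α₂ φ u * tauF α₁ α₂ u - aF α₁ α₂ φ u * muF α₁ α₂ u) := by
  unfold eta1 eta2 X1 X2 muF tauF
  linear_combination rhoF h α₁ α₂ φ u *
      (bF α₁ α₂ φ u * (α₁ u * deriv α₁ u + α₂ u * deriv α₂ u)
        - aF α₁ α₂ φ u * (α₂ u * deriv α₁ u - α₁ u * deriv α₂ u)) *
    Real.cos_sq_add_sin_sq v

theorem bF_mul_tauF_sub_aF_mul_muF {α₁ α₂ φ : ℝ → ℝ} {u : ℝ} (hφ : φ u ≠ 0)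
    (hτ : φ u * deriv φ u = tauF α₁ α₂ u) :
    bF α₁ α₂ φ u * tauF α₁ α₂ u - aF α₁ α₂ φ u * muF α₁ α₂ u = tauF α₁ α₂ u / φ u := by
  unfold aF bF
  field_simp
  linear_combination -(muF α₁ α₂ u) ^ 2 * hτ

theorem rotator_iff_H_eq_general (h : ℝ) (α₁ α₂ φ : ℝ → ℝ)
    (hα₁ : ContDiff ℝ 2 α₁) (hα₂ : ContDiff ℝ 2 α₂) (hφ : ContDiff ℝ 2 φ)
    (hhyp : ∀ u : ℝ, (φ u) ^ 2 = 1 + ((α₁ u) ^ 2 + (α₂ u) ^ 2))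
    (hpos : ∀ u : ℝ, 0 < φ u) :
    IsRotator h α₁ α₂ φ ↔
      ∀ u v : ℝ, Hmean h α₁ α₂ φ u v = rhoF h α₁ α₂ φ u * tauF α₁ α₂ u / φ u := by
  have rotator_rhs : ∀ u v : ℝ,
      -(X2 α₁ α₂ u v) * eta1 h α₁ α₂ φ u v + X1 α₁ α₂ u v * eta2 h α₁ α₂ φ u v
        = rhoF h α₁ α₂ φ u * tauF α₁ α₂ u / φ u := by
    intro u v
    have hτ := phi_mul_deriv_eq_tauF (hα₁.differentiable two_ne_zero u)
      (hα₂.differentiable two_ne_zero u) (hφ.differentiable two_ne_zero u) hhyp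
    rw [neg_X2_mul_eta1_add_X1_mul_eta2, bF_mul_tauF_sub_aF_mul_muF (hpos u).ne' hτ, mul_div_assoc]
  simp only [IsRotator, rotator_rhs]

/-- an `h`-pitched helicoidal surface is a rotator to MCF if and only if
its mean curvature satisfies `H = ρτ/φ`. -/
theorem rotator_iff_H_eq (h : ℝ) (hh : 0 < h) (α₁ α₂ φ : ℝ → ℝ)
    (hα₁ : ContDiff ℝ 2 α₁) (hα₂ : ContDiff ℝ 2 α₂) (hφ : ContDiff ℝ 2 φ)
    (hunit : ∀ u : ℝ, (deriv α₁ u) ^ 2 + (deriv α₂ u) ^ 2 = 1)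
    (hhyp : ∀ u : ℝ, (φ u) ^ 2 = 1 + ((α₁ u) ^ 2 + (α₂ u) ^ 2))
    (hpos : ∀ u : ℝ, 0 < φ u) :
    IsRotator h α₁ α₂ φ ↔
      ∀ u v : ℝ, Hmean h α₁ α₂ φ u v = rhoF h α₁ α₂ φ u * tauF α₁ α₂ u / φ u :=
  rotator_iff_H_eq_general h α₁ α₂ φ hα₁ hα₂ hφ hhyp hpos
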